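/- Let Γ = (V, E, s, r) be a directed graph with V nonempty such that V has no proper nonempty hereditary subsets. Then either every cycle in Γ has an exit, or Γ is a cycle: there is a cycle C = e₁⋯e_n without an exit such that V(C) = V and E = {e₁, …, e_n}. -/

import Mathlib

/-- Adjacency in a directed graph with edge set `E`, vertex set `V`,
source map `s` and range map `r`: there is an edge from `v` to `w`. -/
def Graph.EdgeAdj {V E : Type*} (s r : E → V) (v w : V) : Prop :=
  ∃ e : E, s e = v ∧ r e = w

/-- `w` is a descendant of `v`: there is a (possibly zero-length) path from `v` to `w`. -/
def Graph.Descendant {V E : Type*} (s r : E → V) : V → V → Prop :=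
  Relation.ReflTransGen (Graph.EdgeAdj s r)

/-- A subset `W` of the vertices is hereditary if all descendants of vertices of `W` lie in `W`. -/
def Graph.Hereditary {V E : Type*} (s r : E → V) (W : Set V) : Prop :=
  ∀ v ∈ W, ∀ w : V, Graph.Descendant s r v w → w ∈ W

/-- `W^⊥`: the set of vertices having no descendant in `W`. -/
def Graph.Perp {V E : Type*} (s r : E → V) (W : Set V) : Set V :=
  {v : V | ∀ w ∈ W, ¬ Graph.Descendant s r v w}

/-- A cycle `e₀ e₁ ⋯ e_{n-1}` (n ≥ 1) in the graph: the range of each edge is the source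
of the next one (cyclically, so in particular `s(e₀) = r(e_{n-1})`), and the source
vertices of the edges are pairwise distinct. -/
structure Graph.Cycle {V E : Type*} (s r : E → V) where
  n : ℕ
  npos : 0 < n
  edge : Fin n → E
  chain : ∀ i : Fin n, r (edge i) = s (edge ⟨(i.val + 1) % n, Nat.mod_lt _ npos⟩)
  inj : Function.Injective (fun i : Fin n => s (edge i))

/-- The set of vertices of a cycle. -/
def Graph.Cycle.verts {V E : Type*} {s r : E → V} (C : Graph.Cycle s r) : Set V :=
  Set.range (fun i : Fin C.n => s (C.edge i))

/-- An edge `f` is an exit from the cycle `C` if its source lies on `C`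
but `f` is not one of the edges of `C`. -/
def Graph.Cycle.IsExit {V E : Type*} {s r : E → V} (C : Graph.Cycle s r) (f : E) : Prop :=
  s f ∈ C.verts ∧ ∀ i : Fin C.n, f ≠ C.edge i

namespace Graph.Cycle

variable {V E : Type*} {s r : E → V} (C : Graph.Cycle s r)

theorem verts_nonempty : C.verts.Nonempty :=
  ⟨_, ⟨⟨0, C.npos⟩, rfl⟩⟩

theorem range_edge_mem_verts (i : Fin C.n) : r (C.edge i) ∈ C.verts := by
  rw [C.chain i]
  exact ⟨_, rfl⟩

theorem exists_eq_edge_of_forall_not_isExit (hC : ∀ f : E, ¬ C.IsExit f) {f : E}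
    (hf : s f ∈ C.verts) : ∃ i : Fin C.n, f = C.edge i := by
  by_contra! hne
  exact hC f ⟨hf, hne⟩

theorem hereditary_verts_of_forall_not_isExit (hC : ∀ f : E, ¬ C.IsExit f) :
    Graph.Hereditary s r C.verts := by
  intro v hv w hvw
  induction hvw with
  | refl => exact hv
  | tail _ hadj ih =>
    obtain ⟨e, rfl, rfl⟩ := hadj
    obtain ⟨i, rfl⟩ := C.exists_eq_edge_of_forall_not_isExit hC ih
    exact C.range_edge_mem_verts i

end Graph.Cycle

theorem simple_or_cycle_general {V E : Type*} (s r : E → V)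
    (h : ∀ W : Set V, Graph.Hereditary s r W → W.Nonempty → W = Set.univ) :
    (∀ C : Graph.Cycle s r, ∃ f : E, C.IsExit f) ∨
    (∃ C : Graph.Cycle s r, (∀ f : E, ¬ C.IsExit f) ∧ C.verts = Set.univ ∧
      ∀ f : E, ∃ i : Fin C.n, f = C.edge i) := by
  refine or_iff_not_imp_left.2 fun hexit => ?_
  push Not at hexit
  obtain ⟨C, hC⟩ := hexit
  have hverts : C.verts = Set.univ :=
    h _ (C.hereditary_verts_of_forall_not_isExit hC) C.verts_nonempty
  exact ⟨C, hC, hverts, fun f =>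
    C.exists_eq_edge_of_forall_not_isExit hC (hverts ▸ Set.mem_univ (s f))⟩

theorem simple_or_cycle {V E : Type*} (s r : E → V) [Nonempty V]
    (h : ∀ W : Set V, Graph.Hereditary s r W → W.Nonempty → W = Set.univ) :
    (∀ C : Graph.Cycle s r, ∃ f : E, C.IsExit f) ∨
    (∃ C : Graph.Cycle s r, (∀ f : E, ¬ C.IsExit f) ∧ C.verts = Set.univ ∧
      ∀ f : E, ∃ i : Fin C.n, f = C.edge i) :=
  simple_or_cycle_general s r h
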